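/- Let A = F[X,Y,Z] be a polynomial ring over a field F, N ≥ 2 with char F not dividing N, k ∈ ℕ, and q a power of char F. Let J = (X^N + Y^N + Z^N) + (Y^q, Z^q)^k. Then with respect to graded reverse lexicographic order with X > Y > Z, the initial ideal of J is (X^N) + (Y^q, Z^q)^k. -/

import Mathlib

open MvPolynomial

/-- The comparison key for the graded reverse lexicographic order on monomials in three
variables `X = X 0 > Y = X 1 > Z = X 2`: exponents `σ` are compared by total degree,
then (to break ties) by smaller `Z`-exponent (i.e. larger `σ 0 + σ 1`), then by smaller
`Y`-exponent (i.e. larger `σ 0`). The key is strictly monotone for grevlex, so `σ` is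
grevlex-larger than `τ` iff `grevlexKey τ < grevlexKey σ` lexicographically. -/
def grevlexKey (σ : Fin 3 →₀ ℕ) : Lex (ℕ × ℕ × ℕ) :=
  toLex (σ 0 + σ 1 + σ 2, σ 0 + σ 1, σ 0)

/-- The initial ideal of an ideal `J ⊆ F[X,Y,Z]` with respect to the graded reverse
lexicographic order with `X > Y > Z`: the ideal generated by the leading monomials of
the nonzero elements of `J`. -/
noncomputable def initialIdeal {F : Type*} [Field F] (J : Ideal (MvPolynomial (Fin 3) F)) :
    Ideal (MvPolynomial (Fin 3) F) :=
  Ideal.span {m | ∃ f ∈ J, f ≠ 0 ∧ ∃ σ ∈ f.support,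
    (∀ τ ∈ f.support, grevlexKey τ ≤ grevlexKey σ) ∧
    m = MvPolynomial.monomial σ (1 : F)}

/-!
Write `g ∈ J` as `a * f + z` with `f = X^N + Y^N + Z^N`, `z ∈ M = (Y^q, Z^q)^k`, and no monomial
of `a` in `M`. The generators `Y^{qr} Z^{q(k-r)}` of `M` do not involve `X`, so the leading
monomial `lm(a) X^N` of `a * f` is not in `M` either; hence `z` cannot cancel it, and the leading
monomial of `g` is `lm(a) X^N` or a monomial of `z`. This is Buchberger's criterion for leading
monomials without common variables.
-/

open scoped MonomialOrder

theorem Finsupp.le_of_le_add_of_disjoint {σ : Type*} {ν μ d : σ →₀ ℕ}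
    (hd : Disjoint ν.support d.support) (h : ν ≤ μ + d) : ν ≤ μ := by
  intro i
  by_cases hi : i ∈ ν.support
  · have hdi : d i = 0 := Finsupp.notMem_support_iff.mp (Finset.disjoint_left.mp hd hi)
    simpa [hdi] using h i
  · simp_all

theorem Ideal.span_pair_pow {R : Type*} [CommSemiring R] (a b : R) (k : ℕ) :
    Ideal.span {a, b} ^ k = Ideal.span ((fun r ↦ a ^ r * b ^ (k - r)) '' Set.Iic k) := by
  induction k with
  | zero => simp [Set.Iic, Ideal.one_eq_top]
  | succ k ih =>
    rw [pow_succ', ih, Ideal.span_mul_span']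
    congr 1
    ext x
    simp only [Set.mem_mul, Set.mem_insert_iff, Set.mem_singleton_iff, Set.mem_image,
      Set.mem_Iic]
    constructor
    · rintro ⟨_, rfl | rfl, _, ⟨r, hr, rfl⟩, rfl⟩
      · refine ⟨r + 1, by omega, ?_⟩
        rw [pow_succ', mul_assoc, Nat.add_sub_add_right]
      · refine ⟨r, by omega, ?_⟩
        rw [Nat.sub_add_comm hr, pow_succ', mul_left_comm]
    · rintro ⟨_ | r, hr, rfl⟩
      · exact ⟨b, Or.inr rfl, b ^ k, ⟨0, by omega, by simp⟩, by simp [pow_succ']⟩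
      · refine ⟨a, Or.inl rfl, a ^ r * b ^ (k - r), ⟨r, by omega, rfl⟩, ?_⟩
        rw [pow_succ', mul_assoc, Nat.add_sub_add_right]

namespace MvPolynomial

variable {σ R : Type*} [CommSemiring R]

theorem span_X_pow_pair_pow (i j : σ) (q k : ℕ) :
    Ideal.span {(X i : MvPolynomial σ R) ^ q, X j ^ q} ^ k =
      Ideal.span ((fun ν ↦ monomial ν (1 : R)) ''
        ((fun r ↦ Finsupp.single i (q * r) + Finsupp.single j (q * (k - r))) '' Set.Iic k)) := by
  rw [Ideal.span_pair_pow, Set.image_image]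
  congr! with r
  rw [← pow_mul, ← pow_mul, X_pow_eq_monomial, X_pow_eq_monomial, monomial_mul, mul_one]

theorem support_sum_monomial_filter_subset (p : MvPolynomial σ R) (P : (σ →₀ ℕ) → Prop)
    [DecidablePred P] :
    (∑ μ ∈ p.support with P μ, monomial μ (coeff μ p)).support ⊆ {μ ∈ p.support | P μ} := by
  classical
  intro μ hμ
  obtain ⟨ν, hν, hμν⟩ := Finset.mem_biUnion.mp (support_sum hμ)
  rwa [Finset.mem_singleton.mp (support_monomial_subset hμν)]

theorem exists_eq_add_of_support_split (P : (σ →₀ ℕ) → Prop) (p : MvPolynomial σ R) :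
    ∃ a c, p = a + c ∧ (∀ μ ∈ a.support, ¬ P μ) ∧ ∀ μ ∈ c.support, P μ := by
  classical
  refine ⟨∑ μ ∈ p.support with ¬ P μ, monomial μ (coeff μ p),
    ∑ μ ∈ p.support with P μ, monomial μ (coeff μ p), ?_,
    fun μ hμ ↦ (Finset.mem_filter.mp (support_sum_monomial_filter_subset p _ hμ)).2,
    fun μ hμ ↦ (Finset.mem_filter.mp (support_sum_monomial_filter_subset p _ hμ)).2⟩
  rw [add_comm, Finset.sum_filter_add_sum_filter_not, ← as_sum]

theorem exists_eq_mul_add_of_mem_span_singleton_sup_span_monomial {S : Set (σ →₀ ℕ)}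
    {f g : MvPolynomial σ R}
    (hg : g ∈ Ideal.span {f} ⊔ Ideal.span ((fun ν ↦ monomial ν (1 : R)) '' S)) :
    ∃ a z, z ∈ Ideal.span ((fun ν ↦ monomial ν (1 : R)) '' S) ∧
      (∀ μ ∈ a.support, ∀ ν ∈ S, ¬ ν ≤ μ) ∧ g = a * f + z := by
  obtain ⟨_, hy, z, hz, rfl⟩ := Submodule.mem_sup.mp hg
  obtain ⟨b, rfl⟩ := Ideal.mem_span_singleton'.mp hy
  obtain ⟨a, c, rfl, ha, hc⟩ := exists_eq_add_of_support_split (fun μ ↦ ∃ ν ∈ S, ν ≤ μ) b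
  refine ⟨a, c * f + z, ?_, fun μ hμ ν hν hνμ ↦ ha μ hμ ⟨ν, hν, hνμ⟩, by ring⟩
  exact add_mem (Ideal.mul_mem_right _ _ (mem_ideal_span_monomial_image.mpr hc)) hz

end MvPolynomial

namespace MonomialOrder

variable {σ R : Type*} [CommSemiring R] (m : MonomialOrder σ)

theorem degree_eq_of_forall_le {f : MvPolynomial σ R} {d : σ →₀ ℕ} (hd : d ∈ f.support)
    (h : ∀ c ∈ f.support, c ≼[m] d) : m.degree f = d :=
  m.toSyn.injective (le_antisymm (m.degree_le_iff.mpr h) (m.le_degree hd))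

theorem exists_le_degree_of_mem_span_singleton_sup_span_monomial [NoZeroDivisors R]
    {S : Set (σ →₀ ℕ)} {f g : MvPolynomial σ R}
    (hS : ∀ ν ∈ S, Disjoint ν.support (m.degree f).support)
    (hg : g ∈ Ideal.span {f} ⊔ Ideal.span ((fun ν ↦ monomial ν (1 : R)) '' S)) (hg0 : g ≠ 0) :
    ∃ ν ∈ insert (m.degree f) S, ν ≤ m.degree g := by
  classical
  obtain ⟨a, z, hz, ha, rfl⟩ := exists_eq_mul_add_of_mem_span_singleton_sup_span_monomial hg
  have hzS := mem_ideal_span_monomial_image.mp hz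
  rcases Finset.mem_union.mp (support_add (m.degree_mem_support hg0)) with hdeg | hdeg
  · have haf : a * f ≠ 0 := by rintro h; simp [h] at hdeg
    have ha0 := left_ne_zero_of_mul haf
    have hdeg_mul := m.degree_mul ha0 (right_ne_zero_of_mul haf)
    have hz_deg : coeff (m.degree (a * f)) z = 0 := by
      refine notMem_support_iff.mp fun hmem ↦ ?_
      obtain ⟨ν, hν, hle⟩ := hzS _ hmem
      rw [hdeg_mul] at hle
      exact ha _ (m.degree_mem_support ha0) ν hν (Finsupp.le_of_le_add_of_disjoint (hS ν hν) hle)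
    have hmem : m.degree (a * f) ∈ (a * f + z).support := by
      rw [mem_support_iff, coeff_add, hz_deg, add_zero]
      exact mem_support_iff.mp (m.degree_mem_support haf)
    have heq : m.degree (a * f + z) = m.degree (a * f) :=
      m.toSyn.injective (le_antisymm (m.le_degree hdeg) (m.le_degree hmem))
    exact ⟨m.degree f, Set.mem_insert _ _, by rw [heq, hdeg_mul]; exact le_add_self⟩
  · obtain ⟨ν, hν, hle⟩ := hzS _ hdeg
    exact ⟨ν, Set.mem_insert_of_mem _ hν, hle⟩

end MonomialOrder

/- `grevlexKey` takes values in `Lex (ℕ × (ℕ × ℕ))`, whose inner pair is ordered componentwise,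
so it only orders monomials partially; `degLex` refines that partial order. -/
open MonomialOrder in
theorem degLex_le_of_grevlexKey_le {σ τ : Fin 3 →₀ ℕ} (h : grevlexKey τ ≤ grevlexKey σ) :
    τ ≼[degLex] σ := by
  simp only [grevlexKey, Prod.Lex.toLex_le_toLex, Prod.le_def] at h
  rw [degLex_le_iff, Finsupp.DegLex.le_iff]
  simp only [ofDegLex_toDegLex, Finsupp.degree_eq_sum, Fin.sum_univ_three]
  rcases h with h | ⟨h, h01, h0⟩
  · exact Or.inl h
  refine Or.inr ⟨h, ?_⟩
  rcases h0.lt_or_eq with h0 | h0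
  · exact (Finsupp.Lex.lt_iff.mpr ⟨0, fun j hj ↦ absurd hj (Fin.not_lt_zero j), h0⟩).le
  rcases h01.lt_or_eq with h01 | h01
  · refine (Finsupp.Lex.lt_iff.mpr ⟨1, fun j hj ↦ ?_, show τ 1 < σ 1 by omega⟩).le
    obtain rfl : j = 0 := by omega
    exact h0
  · have : τ = σ := by ext i; fin_cases i <;> simp <;> omega
    rw [this]

theorem degLex_degree_eq_of_grevlexKey {R : Type*} [CommSemiring R]
    {g : MvPolynomial (Fin 3) R} {σ : Fin 3 →₀ ℕ} (hσ : σ ∈ g.support)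
    (hmax : ∀ τ ∈ g.support, grevlexKey τ ≤ grevlexKey σ) :
    MonomialOrder.degLex.degree g = σ :=
  MonomialOrder.degLex.degree_eq_of_forall_le hσ fun τ hτ ↦
    degLex_le_of_grevlexKey_le (hmax τ hτ)

section initialIdeal

variable {F : Type*} [Field F] {J I : Ideal (MvPolynomial (Fin 3) F)}

theorem monomial_mem_initialIdeal {g : MvPolynomial (Fin 3) F} (hg : g ∈ J)
    {σ : Fin 3 →₀ ℕ} (hσ : σ ∈ g.support)
    (hmax : ∀ τ ∈ g.support, grevlexKey τ ≤ grevlexKey σ) :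
    monomial σ 1 ∈ initialIdeal J :=
  Ideal.subset_span ⟨g, hg, by rintro rfl; simp at hσ, σ, hσ, hmax, rfl⟩

theorem monomial_mem_initialIdeal_of_mem {ν : Fin 3 →₀ ℕ} (h : monomial ν (1 : F) ∈ J) :
    monomial ν 1 ∈ initialIdeal J := by
  classical
  have hsupp : (monomial ν (1 : F)).support = {ν} := by simp [support_monomial]
  exact monomial_mem_initialIdeal h (by simp [hsupp]) (by simp [hsupp])

theorem initialIdeal_le_of_forall_degLex
    (h : ∀ g ∈ J, g ≠ 0 → monomial (MonomialOrder.degLex.degree g) 1 ∈ I) :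
    initialIdeal J ≤ I := by
  rw [initialIdeal, Ideal.span_le]
  rintro _ ⟨g, hg, hg0, σ, hσ, hmax, rfl⟩
  rw [← degLex_degree_eq_of_grevlexKey hσ hmax]
  exact h g hg hg0

end initialIdeal

section diagonal

variable {R : Type*} [CommSemiring R] (N : ℕ)

theorem support_diagonal_subset :
    (X 0 ^ N + X 1 ^ N + X 2 ^ N : MvPolynomial (Fin 3) R).support ⊆
      {Finsupp.single 0 N, Finsupp.single 1 N, Finsupp.single 2 N} := by
  intro τ hτ
  simp only [mem_support_iff, coeff_add, coeff_X_pow] at hτ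
  simp only [Finset.mem_insert, Finset.mem_singleton]
  by_contra! h
  simp [Ne.symm h.1, Ne.symm h.2.1, Ne.symm h.2.2] at hτ

theorem single_mem_support_diagonal [Nontrivial R] (hN : N ≠ 0) :
    Finsupp.single 0 N ∈ (X 0 ^ N + X 1 ^ N + X 2 ^ N : MvPolynomial (Fin 3) R).support := by
  simp [mem_support_iff, coeff_X_pow, Finsupp.single_eq_single_iff, hN]

theorem grevlexKey_le_of_mem_support_diagonal {τ : Fin 3 →₀ ℕ}
    (hτ : τ ∈ (X 0 ^ N + X 1 ^ N + X 2 ^ N : MvPolynomial (Fin 3) R).support) :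
    grevlexKey τ ≤ grevlexKey (Finsupp.single 0 N) := by
  have := support_diagonal_subset N hτ
  simp only [Finset.mem_insert, Finset.mem_singleton] at this
  rcases this with rfl | rfl | rfl <;>
    simp [grevlexKey, Prod.Lex.toLex_le_toLex, Prod.le_def]

end diagonal

theorem initialIdeal_diagonal_general {F : Type*} [Field F]
    (N : ℕ) (hN : 2 ≤ N) (k : ℕ) (q : ℕ) :
    initialIdeal
        (Ideal.span {(X 0 : MvPolynomial (Fin 3) F) ^ N + X 1 ^ N + X 2 ^ N} +
          (Ideal.span {(X 1 : MvPolynomial (Fin 3) F) ^ q, X 2 ^ q}) ^ k) =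
      Ideal.span {(X 0 : MvPolynomial (Fin 3) F) ^ N} +
        (Ideal.span {(X 1 : MvPolynomial (Fin 3) F) ^ q, X 2 ^ q}) ^ k := by
  set f : MvPolynomial (Fin 3) F := X 0 ^ N + X 1 ^ N + X 2 ^ N
  set S : Set (Fin 3 →₀ ℕ) :=
    (fun r ↦ Finsupp.single 1 (q * r) + Finsupp.single 2 (q * (k - r))) '' Set.Iic k
  have hf : Finsupp.single 0 N ∈ f.support := single_mem_support_diagonal N (by omega)
  have hf_max : ∀ τ ∈ f.support, grevlexKey τ ≤ grevlexKey (Finsupp.single 0 N) :=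
    fun _ ↦ grevlexKey_le_of_mem_support_diagonal N
  have hf_deg : MonomialOrder.degLex.degree f = Finsupp.single 0 N :=
    degLex_degree_eq_of_grevlexKey hf hf_max
  have hS : ∀ ν ∈ S, Disjoint ν.support (MonomialOrder.degLex.degree f).support := by
    rintro _ ⟨r, -, rfl⟩
    rw [hf_deg]
    refine Finset.disjoint_left.mpr fun i hi hi0 ↦ ?_
    rw [Finset.mem_singleton.mp (Finsupp.support_single_subset hi0)] at hi
    simp at hi
  have hRHS : Ideal.span {X 0 ^ N} ⊔ Ideal.span ((fun ν ↦ monomial ν (1 : F)) '' S) =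
      Ideal.span ((fun ν ↦ monomial ν 1) '' insert (Finsupp.single 0 N) S) := by
    rw [Set.image_insert_eq, Ideal.span_insert, X_pow_eq_monomial]
  rw [span_X_pow_pair_pow, Submodule.add_eq_sup, Submodule.add_eq_sup, hRHS]
  apply le_antisymm
  · refine initialIdeal_le_of_forall_degLex fun g hg hg0 ↦ mem_ideal_span_monomial_image.mpr ?_
    intro μ hμ
    rw [Finset.mem_singleton.mp (support_monomial_subset hμ), ← hf_deg]
    exact MonomialOrder.degLex.exists_le_degree_of_mem_span_singleton_sup_span_monomial hS hg hg0
  · rw [Ideal.span_le]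
    rintro _ ⟨ν, rfl | hν, rfl⟩
    · exact monomial_mem_initialIdeal (Ideal.mem_sup_left (Ideal.mem_span_singleton_self f))
        hf hf_max
    · exact monomial_mem_initialIdeal_of_mem
        (Ideal.mem_sup_right (Ideal.subset_span (Set.mem_image_of_mem _ hν)))

/-- **The initial ideal of `(X^N + Y^N + Z^N, (Y^q, Z^q)^k)`.** Let `A = F[X,Y,Z]`, let
`N ≥ 2` with `char F = p` prime not dividing `N`, let `k ∈ ℕ` and `q = p^e`. If
`J = (X^N + Y^N + Z^N) + (Y^q, Z^q)^k`, then with respect to the graded reverse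
lexicographic order with `X > Y > Z`, the initial ideal of `J` is
`(X^N) + (Y^q, Z^q)^k`. -/
theorem initialIdeal_diagonal {F : Type*} [Field F] (p : ℕ) [Fact p.Prime] [CharP F p]
    (N : ℕ) (hN : 2 ≤ N) (hpN : ¬ p ∣ N) (k e : ℕ) (q : ℕ) (hq : q = p ^ e) :
    initialIdeal
        (Ideal.span {(X 0 : MvPolynomial (Fin 3) F) ^ N + X 1 ^ N + X 2 ^ N} +
          (Ideal.span {(X 1 : MvPolynomial (Fin 3) F) ^ q, X 2 ^ q}) ^ k) =
      Ideal.span {(X 0 : MvPolynomial (Fin 3) F) ^ N} +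
        (Ideal.span {(X 1 : MvPolynomial (Fin 3) F) ^ q, X 2 ^ q}) ^ k :=
  initialIdeal_diagonal_general N hN k q
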